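/- arXiv:1907.05167 — 8 statements merged into one kernel-verified Lean document; each statement's English description precedes it below -/
import Mathlib

section
/- For every integer u ≥ 1, the sum ∑_{m=1}^{u} (2u+1)!/(16^{u-1} · (u!)^2) · (2m-2)! · (2m-1)! · m! · (2u-2m)! / ((2m+1)! · ((m-1)!)^3 · ((u-m)!)^2) equals 1. -/
/-!
Put `u = n + 1`, `m = k + 1` and `c j = centralBinom j`. The summand is then
`weight k * c (n - k) / total n` with `weight k = c k / (2 (2k + 3))` and
`total n = 16ⁿ ((n + 1)!)² / (2n + 3)!`, so the claim is the convolution identity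
`∑_{k ≤ n} weight k * c (n - k) = total n`. Both sides are multiplied by
`growth n = 8 (n + 2) / (2n + 5)` when `n` increases by one: for `total` this is a factorial
computation, for the convolution it is Zeilberger's creative telescoping, with a certificate
built from the Catalan numbers.
-/

open Finset Nat

namespace CentralBinomConvolution

lemma cast_centralBinom_eq_factorial (j : ℕ) :
    (centralBinom j : ℚ) = (2 * j)! / (j ! : ℚ) ^ 2 := by
  rw [centralBinom_eq_two_mul_choose, Nat.cast_choose ℚ (by omega), two_mul, Nat.add_sub_cancel,
    sq]

lemma cast_centralBinom_succ (j : ℕ) :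
    (centralBinom (j + 1) : ℚ) = 2 * (2 * j + 1) / (j + 1) * centralBinom j := by
  rw [div_mul_eq_mul_div, eq_div_iff (by positivity), mul_comm]
  exact_mod_cast succ_mul_centralBinom_succ j

lemma cast_catalan (j : ℕ) : (catalan j : ℚ) = centralBinom j / (j + 1) := by
  rw [eq_div_iff (by positivity), mul_comm]
  exact_mod_cast succ_mul_catalan_eq_centralBinom j

def weight (k : ℕ) : ℚ := centralBinom k / (2 * (2 * k + 3))

def total (n : ℕ) : ℚ := 16 ^ n * ((n + 1)! : ℚ) ^ 2 / (2 * n + 3)!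

def growth (n : ℕ) : ℚ := 8 * (n + 2) / (2 * n + 5)

def convolution (n : ℕ) : ℚ := ∑ k ∈ range (n + 1), weight k * centralBinom (n - k)

-- Produced by Zeilberger's algorithm; see `certificate_step`.
def certificate (n k : ℕ) : ℚ :=
  k * (4 * (k + 1) * ((k : ℚ) - n) - 2 * n - 3) / (4 * (n + 1) * (n + 2)) * weight k *
    catalan (n - k)

lemma weight_succ (k : ℕ) :
    weight (k + 1) = 2 * (2 * k + 1) * (2 * k + 3) / ((k + 1) * (2 * k + 5)) * weight k := by
  unfold weight
  rw [cast_centralBinom_succ]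
  push_cast
  field_simp
  ring

lemma total_succ (n : ℕ) : total (n + 1) = growth n * total n := by
  unfold total growth
  rw [show 2 * (n + 1) + 3 = 2 * n + 3 + 1 + 1 by ring, factorial_succ (2 * n + 3 + 1),
    factorial_succ (2 * n + 3), factorial_succ (n + 1)]
  push_cast
  field_simp
  ring

lemma total_pos (n : ℕ) : 0 < total n := by
  unfold total
  positivity

lemma certificate_zero_right (n : ℕ) : certificate n 0 = 0 := by
  simp [certificate]

lemma certificate_step (k j : ℕ) :
    weight k * centralBinom (j + 2) =
      growth (k + j + 1) * (weight k * centralBinom (j + 1)) +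
        growth (k + j + 1) * (certificate (k + j + 1) (k + 1) - certificate (k + j + 1) k) := by
  unfold certificate growth
  rw [show k + j + 1 - (k + 1) = j by omega, show k + j + 1 - k = j + 1 by omega, cast_catalan,
    cast_catalan, cast_centralBinom_succ (j + 1), cast_centralBinom_succ j, weight_succ]
  push_cast
  field_simp
  ring

lemma certificate_boundary (n : ℕ) :
    growth n * certificate n n + weight n * (2 - growth n) + weight (n + 1) = 0 := by
  unfold certificate growth
  rw [Nat.sub_self, catalan_zero, weight_succ]
  push_cast
  field_simp
  ring

lemma convolution_succ (n : ℕ) : convolution (n + 1) = growth n * convolution n := by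
  have telescoped : ∑ k ∈ range n, weight k * centralBinom (n + 1 - k) =
      growth n * ∑ k ∈ range n, weight k * centralBinom (n - k) +
        growth n * (certificate n n - certificate n 0) := by
    rw [← sum_range_sub, mul_sum, mul_sum, ← sum_add_distrib]
    refine sum_congr rfl fun k hk => ?_
    obtain ⟨j, rfl⟩ : ∃ j, n = k + j + 1 := ⟨n - k - 1, by have := mem_range.mp hk; omega⟩
    rw [show k + j + 1 + 1 - k = j + 2 by omega, show k + j + 1 - k = j + 1 by omega]
    exact certificate_step k j
  rw [convolution, convolution, sum_range_succ, sum_range_succ, sum_range_succ, Nat.sub_self,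
    show n + 1 - n = 1 by omega, Nat.sub_self, telescoped, certificate_zero_right]
  simp only [centralBinom_zero, show centralBinom 1 = 2 from rfl]
  linear_combination certificate_boundary n

lemma convolution_eq_total (n : ℕ) : convolution n = total n := by
  induction n with
  | zero => norm_num [convolution, weight, total, factorial]
  | succ n ih => rw [convolution_succ, total_succ, ih]

lemma summand_eq_weight_mul_div_total (k j : ℕ) :
    ((2 * (k + j + 1) + 1)! : ℚ) / (16 ^ (k + j + 1 - 1) * ((k + j + 1)! : ℚ) ^ 2) *
        (((2 * (k + 1) - 2)! : ℚ) * ((2 * (k + 1) - 1)! : ℚ) * ((k + 1)! : ℚ) *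
          ((2 * (k + j + 1) - 2 * (k + 1))! : ℚ)) /
        (((2 * (k + 1) + 1)! : ℚ) * ((k + 1 - 1)! : ℚ) ^ 3 * ((k + j + 1 - (k + 1))! : ℚ) ^ 2)
      = weight k * centralBinom j / total (k + j) := by
  rw [show 2 * (k + j + 1) + 1 = 2 * (k + j) + 3 by ring, show k + j + 1 - 1 = k + j by omega,
    show 2 * (k + 1) - 2 = 2 * k by omega, show 2 * (k + 1) - 1 = 2 * k + 1 by omega,
    show 2 * (k + j + 1) - 2 * (k + 1) = 2 * j by omega,
    show 2 * (k + 1) + 1 = 2 * k + 1 + 1 + 1 by ring, show k + 1 - 1 = k by omega, show k + j + 1 - (k + 1) = j by omega]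
  unfold weight total
  rw [cast_centralBinom_eq_factorial, cast_centralBinom_eq_factorial]
  simp only [factorial_succ]
  push_cast
  field_simp
  ring

end CentralBinomConvolution

open CentralBinomConvolution

/-- For every integer `u ≥ 1`,
`∑_{m=1}^{u} (2u+1)!/(16^{u-1}(u!)²) · (2m-2)!(2m-1)!m!(2u-2m)! / ((2m+1)!((m-1)!)³((u-m)!)²) = 1`. -/
theorem stmt1 (u : ℕ) (hu : 1 ≤ u) :
    ∑ m ∈ Finset.Icc 1 u,
      ((2 * u + 1).factorial : ℚ) / (16 ^ (u - 1) * ((u.factorial : ℚ)) ^ 2) *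
        (((2 * m - 2).factorial : ℚ) * ((2 * m - 1).factorial : ℚ) * (m.factorial : ℚ) *
          ((2 * u - 2 * m).factorial : ℚ)) /
        (((2 * m + 1).factorial : ℚ) * (((m - 1).factorial : ℚ)) ^ 3 *
          (((u - m).factorial : ℚ)) ^ 2) = 1 := by
  obtain ⟨n, rfl⟩ : ∃ n, u = n + 1 := ⟨u - 1, by omega⟩
  rw [← Ico_add_one_right_eq_Icc, sum_Ico_eq_sum_range, add_tsub_cancel_right]
  calc _ = ∑ k ∈ range (n + 1), weight k * centralBinom (n - k) / total n := by
        refine sum_congr rfl fun k hk => ?_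
        obtain ⟨j, rfl⟩ : ∃ j, n = k + j := ⟨n - k, by have := mem_range.mp hk; omega⟩
        rw [add_comm 1 k, Nat.add_sub_cancel_left]
        exact summand_eq_weight_mul_div_total k j
    _ = 1 := by
        rw [← sum_div]
        exact (div_eq_one_iff_eq (total_pos n).ne').2 (convolution_eq_total n)
end

section
/- For integers u ≥ m ≥ 1, the sum A(u,m) = ∑_{i=m}^{u} 4^i · (i-1)! · (2u-2i+1)! / ((i-m)! · ((u-i)!)^2) equals 4^m · (m-1)! · m! · (2u+1)! / ((u-m)! · (2m+1)! · u!). -/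
/-- Auxiliary natural-number sum: `G u m = ∑_{j=0}^{u-m} (2j+1) C(2j,j) 4^(u-j) C(u-1-j, m-1)`. -/
def G (u m : ℕ) : ℕ :=
  ∑ j ∈ Finset.range (u - m + 1),
    (2*j+1) * Nat.choose (2*j) j * 4^(u-j) * Nat.choose (u-1-j) (m-1)

lemma G_diag (m : ℕ) : G m m = 4 ^ m := by
  simp [G, Nat.sub_self]

lemma G_rec_one (v : ℕ) :
    G (v+2) 1 = 4 * G (v+1) 1 + (2*(v+1)+1) * Nat.choose (2*(v+1)) (v+1) * 4 := by
  unfold G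
  simp only [Nat.sub_self, Nat.choose_zero_right, mul_one]
  rw [show v+2-1+1 = (v+1)+1 by omega, Finset.sum_range_succ]
  rw [show v+1-1+1 = v+1 by omega]
  rw [Finset.mul_sum]
  congr 1
  · apply Finset.sum_congr rfl
    intro j hj
    simp only [Finset.mem_range] at hj
    rw [show v+2-j = (v+1-j)+1 by omega, pow_succ]
    ring
  · rw [show v+2-(v+1) = 1 by omega]
    norm_num

lemma G_rec (k s : ℕ) :
    G (k+s+3) (k+2) = 4 * G (k+s+2) (k+2) + 4 * G (k+s+2) (k+1) := by
  unfold G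
  rw [show k+s+3-(k+2)+1 = s+2 by omega, show k+s+2-(k+2)+1 = s+1 by omega,
    show k+s+2-(k+1)+1 = s+2 by omega]
  have key : ∀ j ∈ Finset.range (s+2),
      (2*j+1) * Nat.choose (2*j) j * 4^(k+s+3-j) * Nat.choose (k+s+3-1-j) (k+2-1)
      = 4 * ((2*j+1) * Nat.choose (2*j) j * 4^(k+s+2-j) * Nat.choose (k+s+2-1-j) (k+2-1))
        + 4 * ((2*j+1) * Nat.choose (2*j) j * 4^(k+s+2-j) * Nat.choose (k+s+2-1-j) (k+1-1)) := by
    intro j hj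
    simp only [Finset.mem_range] at hj
    rw [show k+s+3-1-j = (k+s+1-j)+1 by omega, show k+s+2-1-j = k+s+1-j by omega,
      show k+2-1 = (k+1-1)+1 by omega, Nat.choose_succ_succ',
      show k+s+3-j = (k+s+2-j)+1 by omega, pow_succ]
    ring
  rw [Finset.sum_congr rfl key, Finset.sum_add_distrib, ← Finset.mul_sum, ← Finset.mul_sum]
  congr 1
  rw [Finset.sum_range_succ (n := s+1)]
  rw [show k+s+2-1-(s+1) = k by omega, show k+2-1 = k+1 by omega, Nat.choose_succ_self,
    mul_zero, add_zero]

lemma Gval : ∀ u m : ℕ, 1 ≤ m → m ≤ u →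
    (G u m : ℚ) * (((u-m).factorial : ℚ) * ((2*m+1).factorial : ℚ) * (u.factorial : ℚ))
      = 4^m * (m.factorial : ℚ) * ((2*u+1).factorial : ℚ) := by
  intro u
  induction u using Nat.strong_induction_on with
  | _ u ih =>
    intro m hm hmu
    rcases eq_or_lt_of_le hmu with rfl | hlt
    · rw [G_diag, Nat.sub_self]
      simp only [Nat.factorial_zero]
      push_cast
      ring
    · rcases Nat.lt_or_ge m 2 with h1 | h2
      · have hm1 : m = 1 := by omega
        subst hm1
        obtain ⟨v, rfl⟩ : ∃ v, u = v + 2 := ⟨u - 2, by omega⟩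
        have IH := ih (v+1) (by omega) 1 le_rfl (by omega)
        have hc := Nat.choose_mul_factorial_mul_factorial (show v+1 ≤ 2*(v+1) by omega)
        rw [show 2*(v+1)-(v+1) = v+1 by omega] at hc
        have hcq : (Nat.choose (2*(v+1)) (v+1) : ℚ) * ((v+1).factorial : ℚ) * ((v+1).factorial : ℚ)
            = ((2*(v+1)).factorial : ℚ) := by exact_mod_cast congrArg Nat.cast hc
        have e1 : (2*(v+2)+1).factorial = (2*v+5)*((2*v+4)*((2*v+3) * (2*(v+1)).factorial)) := by
          rw [show 2*(v+2)+1 = 2*(v+1)+1+1+1 by ring, Nat.factorial_succ, Nat.factorial_succ,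
            Nat.factorial_succ]
          try ring
        have e2 : (2*(v+1)+1).factorial = (2*v+3) * (2*(v+1)).factorial := by
          rw [Nat.factorial_succ]; ring
        have e3 : (v+2).factorial = (v+2)*((v+1)*(v.factorial)) := by
          rw [Nat.factorial_succ, Nat.factorial_succ]
        have e4 : (v+1).factorial = (v+1)*v.factorial := by rw [Nat.factorial_succ]
        rw [show v+2-1 = v+1 by omega] at *
        rw [show v+1-1 = v by omega] at IH
        have h6 : (2*1+1).factorial = 6 := rfl
        have hf1 : Nat.factorial 1 = 1 := rfl
        rw [G_rec_one, e1, e3, e4, h6]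
        rw [e2, e4, h6, hf1] at IH
        rw [e4] at hcq
        push_cast at IH hcq ⊢
        norm_num at IH ⊢
        linear_combination (4*((v:ℚ)+1)*((v:ℚ)+2)) * IH + (24*(2*(v:ℚ)+3)*((v:ℚ)+2)) * hcq
      · obtain ⟨k, rfl⟩ : ∃ k, m = k + 2 := ⟨m-2, by omega⟩
        obtain ⟨s, rfl⟩ : ∃ s, u = k + s + 3 := ⟨u - k - 3, by omega⟩
        have IH1 := ih (k+s+2) (by omega) (k+2) (by omega) (by omega)
        have IH2 := ih (k+s+2) (by omega) (k+1) (by omega) (by omega)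
        rw [show k+s+3-(k+2) = s+1 by omega] at *
        rw [show k+s+2-(k+2) = s by omega, show 2*(k+s+2)+1 = 2*k+2*s+5 by ring] at IH1
        rw [show k+s+2-(k+1) = s+1 by omega, show 2*(k+s+2)+1 = 2*k+2*s+5 by ring] at IH2
        rw [G_rec]
        have e1 : (2*(k+s+3)+1).factorial
            = (2*k+2*s+7)*((2*k+2*s+6) * (2*k+2*s+5).factorial) := by
          rw [show 2*(k+s+3)+1 = 2*k+2*s+5+1+1 by ring, Nat.factorial_succ, Nat.factorial_succ]
          try ring
        have e2 : (2*(k+2)+1).factorial = (2*k+5)*((2*k+4) * (2*(k+1)+1).factorial) := by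
          rw [show 2*(k+2)+1 = 2*(k+1)+1+1+1 by ring, Nat.factorial_succ, Nat.factorial_succ]
          try ring
        have e3 : (k+s+3).factorial = (k+s+3) * (k+s+2).factorial := by rw [Nat.factorial_succ]
        have e4 : (s+1).factorial = (s+1) * s.factorial := by rw [Nat.factorial_succ]
        have e5 : (k+2).factorial = (k+2) * (k+1).factorial := by rw [Nat.factorial_succ]
        rw [e1, e2, e3, e4, e5]
        rw [e2, e5] at IH1
        rw [e4] at IH2
        push_cast at IH1 IH2 ⊢
        linear_combination (4*((s:ℚ)+1)*((k:ℚ)+(s:ℚ)+3)) * IH1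
          + (4*(2*(k:ℚ)+5)*(2*(k:ℚ)+4)*((k:ℚ)+(s:ℚ)+3)) * IH2

lemma sum_eq_G (u m : ℕ) (hm : 1 ≤ m) (hmu : m ≤ u) :
    ∑ i ∈ Finset.Icc m u,
      ((4 : ℚ) ^ i * ((i - 1).factorial : ℚ) * ((2 * u - 2 * i + 1).factorial : ℚ)) /
        (((i - m).factorial : ℚ) * (((u - i).factorial : ℚ)) ^ 2)
      = ((m-1).factorial : ℚ) * (G u m : ℚ) := by
  rw [G, Nat.cast_sum, Finset.mul_sum]
  refine Finset.sum_nbij' (fun a => u - a) (fun a => u - a) ?_ ?_ ?_ ?_ ?_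
  · intro a ha
    simp only [Finset.mem_Icc] at ha
    simp only [Finset.mem_range]
    omega
  · intro a ha
    simp only [Finset.mem_range] at ha
    simp only [Finset.mem_Icc]
    omega
  · intro a ha
    simp only [Finset.mem_Icc] at ha
    show u - (u - a) = a
    omega
  · intro a ha
    simp only [Finset.mem_range] at ha
    show u - (u - a) = a
    omega
  · intro a ha
    simp only [Finset.mem_Icc] at ha
    obtain ⟨h1, h2⟩ := ha
    rw [show u - (u - a) = a by omega, show u - 1 - (u - a) = a - 1 by omega]
    have hA : (a-1).factorial = Nat.choose (a-1) (m-1) * (m-1).factorial * (a-m).factorial := by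
      have h := Nat.choose_mul_factorial_mul_factorial (show m-1 ≤ a-1 by omega)
      rw [show a-1-(m-1) = a-m by omega] at h
      exact h.symm
    have hC : (2*(u-a)).factorial
        = Nat.choose (2*(u-a)) (u-a) * (u-a).factorial * (u-a).factorial := by
      have h := Nat.choose_mul_factorial_mul_factorial (show u-a ≤ 2*(u-a) by omega)
      rw [show 2*(u-a)-(u-a) = u-a by omega] at h
      exact h.symm
    rw [show 2*u - 2*a + 1 = 2*(u-a)+1 by omega, Nat.factorial_succ, hA, hC]
    have hne : (((a-m).factorial : ℚ) * (((u-a).factorial : ℚ))^2) ≠ 0 := by positivity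
    rw [div_eq_iff hne]
    push_cast
    ring

/-- For integers `u ≥ m ≥ 1`,
`A(u,m) = ∑_{i=m}^{u} 4^i (i-1)! (2u-2i+1)! / ((i-m)! ((u-i)!)²)`
equals `4^m (m-1)! m! (2u+1)! / ((u-m)! (2m+1)! u!)`. -/
theorem stmt2 (u m : ℕ) (hm : 1 ≤ m) (hmu : m ≤ u) :
    ∑ i ∈ Finset.Icc m u,
      ((4 : ℚ) ^ i * ((i - 1).factorial : ℚ) * ((2 * u - 2 * i + 1).factorial : ℚ)) /
        (((i - m).factorial : ℚ) * (((u - i).factorial : ℚ)) ^ 2)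
      = (4 : ℚ) ^ m * ((m - 1).factorial : ℚ) * (m.factorial : ℚ) *
          ((2 * u + 1).factorial : ℚ) /
        (((u - m).factorial : ℚ) * ((2 * m + 1).factorial : ℚ) * (u.factorial : ℚ)) := by
  rw [sum_eq_G u m hm hmu]
  have hGv := Gval u m hm hmu
  have hne : (((u-m).factorial : ℚ) * ((2*m+1).factorial : ℚ) * (u.factorial : ℚ)) ≠ 0 := by
    positivity
  rw [eq_div_iff hne]
  linear_combination (((m-1).factorial : ℚ)) * hGv
end

section
/- For integers u ≥ m ≥ 1 and m ≤ i ≤ u, setting G(u,m,i) = 4^i·(i-1)!·(2u-2i+1)!/((i-m)!·((u-i)!)^2) and H(u,m,i) = 4^i·(i-1)!·(2u+3-2i)!/((i-m-1)!·((u+1-i)!)^2) (with the convention 1/(-1)! = 0), one has (4u+6)·G(u,m,i) − (u+1−m)·G(u+1,m,i) = H(u,m,i+1) − H(u,m,i). -/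
/-- Factorial of an integer (`1` on negative inputs; only used on nonnegative arguments). -/
noncomputable def zfact (j : ℤ) : ℚ := if 0 ≤ j then ((j.toNat).factorial : ℚ) else 1

/-- Inverse factorial of an integer, with the convention `1/j! = 0` for `j < 0`. -/
noncomputable def zfactInv (j : ℤ) : ℚ := if 0 ≤ j then ((j.toNat).factorial : ℚ)⁻¹ else 0

/-- `G(u,m,i) = 4^i (i-1)! (2u-2i+1)! / ((i-m)! ((u-i)!)²)`. -/
noncomputable def Gfun (u m i : ℤ) : ℚ :=
  (4 : ℚ) ^ i * zfact (i - 1) * zfact (2 * u - 2 * i + 1) * zfactInv (i - m) *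
    (zfactInv (u - i)) ^ 2

/-- `H(u,m,i) = 4^i (i-1)! (2u+3-2i)! / ((i-m-1)! ((u+1-i)!)²)` with `1/(-1)! = 0`. -/
noncomputable def Hfun (u m i : ℤ) : ℚ :=
  (4 : ℚ) ^ i * zfact (i - 1) * zfact (2 * u + 3 - 2 * i) * zfactInv (i - m - 1) *
    (zfactInv (u + 1 - i)) ^ 2

lemma zfact_succ (j : ℤ) (h : 0 ≤ j) : zfact (j + 1) = ((j : ℚ) + 1) * zfact j := by
  unfold zfact
  rw [if_pos (by omega), if_pos h]
  have ht : (j + 1).toNat = j.toNat + 1 := by omega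
  rw [ht, Nat.factorial_succ]
  have hc : ((j.toNat : ℚ)) = j := by exact_mod_cast Int.toNat_of_nonneg h
  push_cast
  rw [hc]

lemma zfactInv_pred (j : ℤ) (h : -1 ≤ j) :
    zfactInv j = ((j : ℚ) + 1) * zfactInv (j + 1) := by
  unfold zfactInv
  by_cases hj : 0 ≤ j
  · rw [if_pos hj, if_pos (by omega)]
    have ht : (j + 1).toNat = j.toNat + 1 := by omega
    rw [ht, Nat.factorial_succ]
    have h1 : ((j.toNat.factorial : ℚ)) ≠ 0 := by positivity
    have h2 : (j : ℚ) + 1 ≠ 0 := by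
      have : (0 : ℚ) ≤ (j : ℚ) := by exact_mod_cast hj
      linarith
    have hc : ((j.toNat : ℚ)) = j := by exact_mod_cast Int.toNat_of_nonneg hj
    push_cast
    rw [hc]
    field_simp
  · rw [if_neg hj, if_pos (by omega)]
    have hj' : j = -1 := by omega
    subst hj'
    norm_num

/-- The Zeilberger certificate identity
`(4u+6)G(u,m,i) − (u+1−m)G(u+1,m,i) = H(u,m,i+1) − H(u,m,i)` for `1 ≤ m ≤ i ≤ u`. -/
theorem stmt3 (u m i : ℤ) (h1 : 1 ≤ m) (h2 : m ≤ i) (h3 : i ≤ u) :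
    (4 * (u : ℚ) + 6) * Gfun u m i - ((u : ℚ) + 1 - (m : ℚ)) * Gfun (u + 1) m i =
      Hfun u m (i + 1) - Hfun u m i := by
  unfold Gfun Hfun
  rw [show i + 1 - 1 = i from by ring,
      show 2 * u + 3 - 2 * (i + 1) = 2 * u - 2 * i + 1 from by ring,
      show i + 1 - m - 1 = i - m from by ring,
      show u + 1 - (i + 1) = u - i from by ring,
      show 2 * (u + 1) - 2 * i + 1 = 2 * u - 2 * i + 2 + 1 from by ring,
      show 2 * u + 3 - 2 * i = 2 * u - 2 * i + 2 + 1 from by ring]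
  have hA : zfact i = (i : ℚ) * zfact (i - 1) := by
    have h := zfact_succ (i - 1) (by omega)
    rw [show i - 1 + 1 = i from by ring] at h
    rw [h]; push_cast; ring
  have hB1 : zfact (2 * u - 2 * i + 1 + 1) =
      ((2 * u : ℚ) - 2 * i + 2) * zfact (2 * u - 2 * i + 1) := by
    have h := zfact_succ (2 * u - 2 * i + 1) (by omega)
    rw [h]; push_cast; ring
  have hB2 : zfact (2 * u - 2 * i + 2 + 1) =
      ((2 * u : ℚ) - 2 * i + 3) * (((2 * u : ℚ) - 2 * i + 2) * zfact (2 * u - 2 * i + 1)) := by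
    have h := zfact_succ (2 * u - 2 * i + 2) (by omega)
    rw [show 2 * u - 2 * i + 1 + 1 = 2 * u - 2 * i + 2 from by ring] at hB1
    rw [h, hB1]; push_cast; ring
  have hC : zfactInv (i - m - 1) = ((i : ℚ) - m) * zfactInv (i - m) := by
    have h := zfactInv_pred (i - m - 1) (by omega)
    rw [show i - m - 1 + 1 = i - m from by ring] at h
    rw [h]; push_cast; ring
  have hD : zfactInv (u - i) = ((u : ℚ) + 1 - i) * zfactInv (u + 1 - i) := by
    have h := zfactInv_pred (u - i) (by omega)
    rw [show u - i + 1 = u + 1 - i from by ring] at h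
    rw [h]; push_cast; ring
  have hP : (4 : ℚ) ^ (i + 1) = 4 * 4 ^ i := by
    rw [zpow_add_one₀ (by norm_num)]; ring
  rw [hA, hB2, hC, hD, hP]
  ring
end

section
/- (Bol's identity) For any γ ∈ SL(2,ℂ), any sufficiently differentiable function f, and any integer h > 0, the (h−1)-st derivative of f|_{2−h} γ equals (∂_z^{h-1} f)|_h γ; that is, ∂_z^{h-1}((cz+d)^{h-2} f((az+b)/(cz+d))) = (cz+d)^{-h} f^{(h-1)}((az+b)/(cz+d)). -/
/-!
Write `F|_kγ` (`slash k γ F`) for `(cz+d)^{-k} F(γz)` and `D` for `∂_z`. Since `D(γz) = (cz+d)^{-2}`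
(this is where `det γ = 1` enters), `D(F|_kγ) = -kc·F|_{k+1}γ + F'|_{k+2}γ`. With `n = h - 1` the
claim is `Dⁿ(F|_{1-n}γ) = F⁽ⁿ⁾|_{n+1}γ` for every holomorphic `F`, by a two-step induction: the
first-order rule and the claim for `n + 1` (applied to `F`) and for `n` (applied to `F'`) give
`Dⁿ⁺²(F|_{-n-1}γ) = (n+1)c·F⁽ⁿ⁺¹⁾|_{n+2}γ + D(F⁽ⁿ⁺¹⁾|_{n+1}γ)`, and expanding the last term by the
first-order rule once more cancels the first.
-/

/-- The homographic action of `γ = (a b; c d) ∈ SL(2,ℂ)`: `z ↦ (az+b)/(cz+d)`. -/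
noncomputable def mact (γ : Matrix.SpecialLinearGroup (Fin 2) ℂ) (z : ℂ) : ℂ :=
  (γ.1 0 0 * z + γ.1 0 1) / (γ.1 1 0 * z + γ.1 1 1)

/-- The automorphy factor `cz + d` for `γ = (a b; c d) ∈ SL(2,ℂ)`. -/
noncomputable def mden (γ : Matrix.SpecialLinearGroup (Fin 2) ℂ) (z : ℂ) : ℂ :=
  γ.1 1 0 * z + γ.1 1 1

open Set

noncomputable def slash (k : ℤ) (γ : Matrix.SpecialLinearGroup (Fin 2) ℂ) (F : ℂ → ℂ) (w : ℂ) :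
    ℂ :=
  mden γ w ^ (-k) * F (mact γ w)

variable (γ : Matrix.SpecialLinearGroup (Fin 2) ℂ)

theorem hasDerivAt_mden (z : ℂ) : HasDerivAt (mden γ) (γ.1 1 0) z := by
  unfold mden
  simpa using ((hasDerivAt_id z).const_mul (γ.1 1 0)).add_const (γ.1 1 1)

theorem hasDerivAt_mact {z : ℂ} (hz : mden γ z ≠ 0) :
    HasDerivAt (mact γ) (mden γ z ^ (-2 : ℤ)) z := by
  have hnum : HasDerivAt (fun w => γ.1 0 0 * w + γ.1 0 1) (γ.1 0 0) z := by
    simpa using ((hasDerivAt_id z).const_mul (γ.1 0 0)).add_const (γ.1 0 1)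
  refine (hnum.div (hasDerivAt_mden γ z) hz).congr_deriv ?_
  have hdet : γ.1 0 0 * γ.1 1 1 - γ.1 0 1 * γ.1 1 0 = 1 := by
    rw [← Matrix.det_fin_two]; exact γ.det_coe
  rw [zpow_neg, zpow_ofNat, ← one_div]
  congr 1
  simp only [mden]
  linear_combination hdet

theorem isOpen_setOf_mden_ne_zero : IsOpen {w | mden γ w ≠ 0} :=
  isOpen_ne_fun (by unfold mden; fun_prop) continuous_const

variable {γ} {F : ℂ → ℂ}

theorem hasDerivAt_slash (k : ℤ) (hF : Differentiable ℂ F) {z : ℂ} (hz : mden γ z ≠ 0) :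
    HasDerivAt (slash k γ F)
      (-k * γ.1 1 0 * slash (k + 1) γ F z + slash (k + 2) γ (deriv F) z) z := by
  have hJ := (hasDerivAt_zpow (-k) (mden γ z) (Or.inl hz)).comp z (hasDerivAt_mden γ z)
  have hFM := (hF (mact γ z)).hasDerivAt.comp z (hasDerivAt_mact γ hz)
  refine (hJ.mul hFM).congr_deriv ?_
  simp only [slash, Int.cast_neg, Function.comp_apply]
  have e1 : mden γ z ^ (-(k + 1)) = mden γ z ^ (-k - 1) := by ring_nf
  have e2 : mden γ z ^ (-(k + 2)) = mden γ z ^ (-k) * mden γ z ^ (-2 : ℤ) := by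
    rw [← zpow_add₀ hz]; ring_nf
  rw [e1, e2]
  ring

theorem contDiffAt_slash (k : ℤ) (hF : Differentiable ℂ F) {z : ℂ} (hz : mden γ z ≠ 0)
    {n : WithTop ℕ∞} : ContDiffAt ℂ n (slash k γ F) z :=
  have hdiff : DifferentiableOn ℂ (slash k γ F) {w | mden γ w ≠ 0} := fun _ hw =>
    (hasDerivAt_slash k hF hw).differentiableAt.differentiableWithinAt
  (hdiff.contDiffOn (isOpen_setOf_mden_ne_zero γ)).contDiffAt
    ((isOpen_setOf_mden_ne_zero γ).mem_nhds hz)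

theorem deriv_slash_eqOn (k : ℤ) (hF : Differentiable ℂ F) :
    EqOn (deriv (slash k γ F))
      (fun w => -k * γ.1 1 0 * slash (k + 1) γ F w + slash (k + 2) γ (deriv F) w)
      {w | mden γ w ≠ 0} :=
  fun _ hw => (hasDerivAt_slash k hF hw).deriv

theorem iteratedDeriv_slash_one_sub (n : ℕ) (hF : Differentiable ℂ F) :
    EqOn (iteratedDeriv n (slash (1 - n) γ F)) (slash (n + 1) γ (iteratedDeriv n F))
      {w | mden γ w ≠ 0} := by
  induction n using Nat.twoStepInduction generalizing F with
  | zero => intro z _; simp [slash]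
  | one => intro z hz; simpa [slash] using (hasDerivAt_slash 0 hF hz).deriv
  | more n ihn ihn1 =>
    intro z hz
    have hU := isOpen_setOf_mden_ne_zero γ
    have hF' : Differentiable ℂ (deriv F) := hF.deriv
    have hFn : Differentiable ℂ (iteratedDeriv (n + 1) F) :=
      hF.contDiff.differentiable_iteratedDeriv (n := ⊤) _ (by simp)
    have hk1 : 1 - ((n + 2 : ℕ) : ℤ) + 1 = 1 - ((n + 1 : ℕ) : ℤ) := by push_cast; ring
    have hk2 : 1 - ((n + 2 : ℕ) : ℤ) + 2 = 1 - (n : ℤ) := by push_cast; ring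
    have hfirst : iteratedDeriv (n + 2) (slash (1 - ((n + 2 : ℕ) : ℤ)) γ F) z =
        (n + 1) * γ.1 1 0 * iteratedDeriv (n + 1) (slash (1 - ((n + 1 : ℕ) : ℤ)) γ F) z +
          iteratedDeriv (n + 1) (slash (1 - n) γ (deriv F)) z := by
      rw [iteratedDeriv_succ', (deriv_slash_eqOn _ hF).iteratedDeriv_of_isOpen hU _ hz, hk1, hk2,
        iteratedDeriv_fun_add (contDiffAt_const.mul (contDiffAt_slash _ hF hz))
          (contDiffAt_slash _ hF' hz),
        iteratedDeriv_const_mul_field]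
      push_cast; ring_nf
    have hsecond : iteratedDeriv (n + 1) (slash (1 - n) γ (deriv F)) z =
        deriv (slash (n + 1) γ (iteratedDeriv (n + 1) F)) z := by
      rw [iteratedDeriv_succ, iteratedDeriv_succ' (f := F)]
      exact ((ihn hF').eventuallyEq_of_mem (hU.mem_nhds hz)).deriv_eq
    rw [hfirst, hsecond, ihn1 hF hz, (hasDerivAt_slash _ hFn hz).deriv, ← iteratedDeriv_succ]
    push_cast; ring_nf

/-- Bol's identity: for `γ ∈ SL(2,ℂ)`, a holomorphic `f`, and `h > 0`,
`∂_z^{h-1}((cz+d)^{h-2} f((az+b)/(cz+d))) = (cz+d)^{-h} f^{(h-1)}((az+b)/(cz+d))`,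
i.e. `(f|_{2-h} γ)^{(h-1)} = (f^{(h-1)})|_h γ`. -/
theorem stmt11 (γ : Matrix.SpecialLinearGroup (Fin 2) ℂ) (f : ℂ → ℂ)
    (hf : Differentiable ℂ f) (h : ℕ) (hh : 0 < h) (z : ℂ) (hz : mden γ z ≠ 0) :
    iteratedDeriv (h - 1) (fun w => (mden γ w) ^ ((h : ℤ) - 2) * f (mact γ w)) z =
      (mden γ z) ^ (-(h : ℤ)) * iteratedDeriv (h - 1) f (mact γ z) := by
  obtain ⟨n, rfl⟩ : ∃ n, h = n + 1 := ⟨h - 1, by omega⟩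
  have hslash :
      (fun w => mden γ w ^ (((n + 1 : ℕ) : ℤ) - 2) * f (mact γ w)) = slash (1 - n) γ f := by
    funext w; simp only [slash]; congr 1; push_cast; ring_nf
  rw [Nat.add_sub_cancel, hslash, iteratedDeriv_slash_one_sub n hf hz]
  simp only [slash]; push_cast; ring_nf
end

section
/- Let B₀ = R[[x;d]] be the skew power series ring over a commutative domain R of characteristic zero containing ℚ, with commutation law x·f = ∑_{n≥0} d^n(f)·x^{n+1}. For any q = 1 + ∑_{i≥1} f_i x^i ∈ B₀ and any integer ℓ ≥ 1, there exists r ∈ B₀ with r^ℓ = q. -/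
/-- Coefficient sequence of the `ℓ`-th root, defined by strong recursion. -/
noncomputable def gfun {R : Type*} [CommRing R] [Algebra ℚ R] {B : Type*} [Ring B]
    (coeff : B ≃+ (ℕ → R)) (q : B) (ℓ : ℕ) : ℕ → R
  | 0 => 1
  | (m+1) => (ℓ : ℚ)⁻¹ •
      (coeff q (m+1) -
        coeff ((coeff.symm (fun i => if h : i ≤ m then gfun coeff q ℓ i else 0)) ^ ℓ) (m+1))
  termination_by n => n
  decreasing_by exact Nat.lt_succ_of_le h

/-- Let `R` be a commutative domain of characteristic zero containing `ℚ` with a derivation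
`d`, and let `B₀ = R[[x;d]]` be the skew power series ring with commutation law
`x·f = ∑_{n≥0} dⁿ(f) x^{n+1}`. We present `B₀` abstractly: a ring `B` with an additive
equivalence `coeff : B ≃+ (ℕ → R)` onto coefficient sequences, a coefficient embedding
`ι : R →+* B`, and the element `x`, such that multiplication is given by the law induced
by the commutation relation. Then every `q = 1 + ∑_{i≥1} f_i x^i` (i.e. `coeff q 0 = 1`)
has an `ℓ`-th root in `B₀` for every `ℓ ≥ 1`. -/
theorem stmt13 {R : Type*} [CommRing R] [IsDomain R] [Algebra ℚ R]
    (d : Derivation ℚ R R)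
    {B : Type*} [Ring B] (coeff : B ≃+ (ℕ → R)) (ι : R →+* B)
    (hι : ∀ (f : R) (n : ℕ), coeff (ι f) n = if n = 0 then f else 0)
    (x : B) (hxc : ∀ n : ℕ, coeff x n = if n = 1 then 1 else 0)
    (hmul : ∀ (p q : B) (m : ℕ),
      coeff (p * q) m =
        ∑ j ∈ Finset.range (m + 1), ∑ i ∈ Finset.range (m - j + 1),
          coeff p i *
            (if i = 0 then (if m - j = 0 then coeff q j else 0)
             else ((m - j - 1).choose (i - 1) : R) * (⇑d)^[m - j - i] (coeff q j))) :
    ∀ q : B, coeff q 0 = 1 → ∀ ℓ : ℕ, 1 ≤ ℓ → ∃ r : B, r ^ ℓ = q := by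
  intro q hq ℓ hℓ
  classical
  have hd0 : ∀ k : ℕ, (⇑d)^[k] (0:R) = 0 := fun k => Function.iterate_fixed (map_zero d) k
  -- order superadditivity
  have hzero : ∀ (p p' : B) (a b m : ℕ), (∀ i < a, coeff p i = 0) →
      (∀ j < b, coeff p' j = 0) → m < a + b → coeff (p * p') m = 0 := by
    intro p p' a b m hp hp' hm
    rw [hmul]
    apply Finset.sum_eq_zero
    intro j hj
    apply Finset.sum_eq_zero
    intro i hi
    by_cases hjb : j < b
    · rw [hp' j hjb]
      simp [hd0]
    · have hjm : j ≤ m := Nat.lt_succ_iff.mp (Finset.mem_range.mp hj)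
      have him : i ≤ m - j := Nat.lt_succ_iff.mp (Finset.mem_range.mp hi)
      have : i < a := by omega
      rw [hp i this, zero_mul]
  have hone : ∀ n, coeff (1:B) n = if n = 0 then 1 else 0 := by
    intro n; rw [← map_one ι]; exact hι 1 n
  have hmul0 : ∀ p p' : B, coeff (p * p') 0 = coeff p 0 * coeff p' 0 := by
    intro p p'
    rw [hmul]
    simp
  have hpow0 : ∀ (p : B) (k : ℕ), coeff p 0 = 1 → coeff (p ^ k) 0 = 1 := by
    intro p k hp
    induction k with
    | zero => simp [hone]
    | succ k ih => rw [pow_succ, hmul0, ih, hp, mul_one]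
  -- left multiplication against a high-order element
  have hmulLeft : ∀ (p E : B) (m : ℕ), (∀ j < m, coeff E j = 0) →
      coeff (p * E) m = coeff p 0 * coeff E m := by
    intro p E m hE
    rw [hmul]
    have h1 : ∀ j ∈ Finset.range (m + 1), j ≠ m →
        (∑ i ∈ Finset.range (m - j + 1),
          coeff p i *
            (if i = 0 then (if m - j = 0 then coeff E j else 0)
             else ((m - j - 1).choose (i - 1) : R) * (⇑d)^[m - j - i] (coeff E j))) = 0 := by
      intro j hj hjm
      apply Finset.sum_eq_zero
      intro i _
      have : j < m := lt_of_le_of_ne (Nat.lt_succ_iff.mp (Finset.mem_range.mp hj)) hjm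
      rw [hE j this]
      simp [hd0]
    rw [Finset.sum_eq_single_of_mem m (Finset.self_mem_range_succ m) h1]
    simp
  -- right multiplication against a high-order element
  have hmulRight : ∀ (T p : B) (m : ℕ), (∀ i < m, coeff T i = 0) →
      coeff (T * p) m = coeff T m * coeff p 0 := by
    intro T p m hT
    rcases Nat.eq_zero_or_pos m with hm | hm
    · subst hm; exact hmul0 T p
    rw [hmul]
    have h1 : ∀ j ∈ Finset.range (m + 1), j ≠ 0 →
        (∑ i ∈ Finset.range (m - j + 1),
          coeff T i *
            (if i = 0 then (if m - j = 0 then coeff p j else 0)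
             else ((m - j - 1).choose (i - 1) : R) * (⇑d)^[m - j - i] (coeff p j))) = 0 := by
      intro j hj hj0
      apply Finset.sum_eq_zero
      intro i hi
      have hjm : j ≤ m := Nat.lt_succ_iff.mp (Finset.mem_range.mp hj)
      have him : i ≤ m - j := Nat.lt_succ_iff.mp (Finset.mem_range.mp hi)
      have : i < m := by omega
      rw [hT i this, zero_mul]
    rw [Finset.sum_eq_single_of_mem 0 (Finset.mem_range.mpr (by omega)) h1]
    have h2 : ∀ i ∈ Finset.range (m - 0 + 1), i ≠ m →
        coeff T i *
            (if i = 0 then (if m - 0 = 0 then coeff p 0 else 0)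
             else ((m - 0 - 1).choose (i - 1) : R) * (⇑d)^[m - 0 - i] (coeff p 0)) = 0 := by
      intro i hi him
      have : i < m := by
        have := Finset.mem_range.mp hi
        omega
      rw [hT i this, zero_mul]
    rw [Finset.sum_eq_single_of_mem m (Finset.mem_range.mpr (by omega)) h2]
    have hmne : m ≠ 0 := by omega
    rw [if_neg hmne]
    simp [Nat.choose_self]
  -- binomial perturbation lemma
  have hbinom : ∀ (s e : B) (m : ℕ), 1 ≤ m → coeff s 0 = 1 → (∀ j < m, coeff e j = 0) →
      ∀ k : ℕ, (∀ j < m, coeff ((s+e)^k - s^k) j = 0) ∧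
        coeff ((s+e)^k - s^k) m = (k : R) * coeff e m := by
    intro s e m hm hs he k
    induction k with
    | zero => simp
    | succ k ih =>
      obtain ⟨ih1, ih2⟩ := ih
      have hre : (s+e)^(k+1) - s^(k+1) =
          s^k * e + ((s+e)^k - s^k) * s + ((s+e)^k - s^k) * e := by
        rw [pow_succ, pow_succ]
        noncomm_ring
      constructor
      · intro j hj
        rw [hre]
        simp only [map_add, Pi.add_apply]
        rw [hzero _ _ 0 m j (fun i hi => absurd hi (Nat.not_lt_zero i)) he (by omega),
            hzero _ _ m 0 j ih1 (fun i hi => absurd hi (Nat.not_lt_zero i)) (by omega),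
            hzero _ _ m m j ih1 he (by omega)]
        ring
      · rw [hre]
        simp only [map_add, Pi.add_apply]
        rw [hmulLeft _ _ _ he, hpow0 s k hs, one_mul,
            hmulRight _ _ _ ih1, ih2, hs, mul_one,
            hzero _ _ m m m ih1 he (by omega)]
        push_cast
        ring
  -- the root
  set g : ℕ → R := gfun coeff q ℓ with hg
  have hg0 : g 0 = 1 := by rw [hg, gfun]
  set r : B := coeff.symm g with hr
  have hrc : ∀ n, coeff r n = g n := by
    intro n; rw [hr, coeff.apply_symm_apply]
  have main : ∀ n, coeff (r ^ ℓ) n = coeff q n := by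
    intro n
    cases n with
    | zero => rw [hpow0 r ℓ (by rw [hrc 0, hg0]), hq]
    | succ m =>
      set s : B := coeff.symm (fun i => if h : i ≤ m then g i else 0) with hsdef
      have hsc : ∀ i, coeff s i = if h : i ≤ m then g i else 0 := by
        intro i; rw [hsdef, coeff.apply_symm_apply]
      have hs0 : coeff s 0 = 1 := by rw [hsc 0, dif_pos (Nat.zero_le m), hg0]
      have hek : ∀ j < m + 1, coeff (r - s) j = 0 := by
        intro j hj
        simp only [map_sub, Pi.sub_apply]
        rw [hrc j, hsc j, dif_pos (Nat.lt_succ_iff.mp hj), sub_self]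
      have he1 : coeff (r - s) (m+1) = g (m+1) := by
        simp only [map_sub, Pi.sub_apply]
        rw [hrc (m+1), hsc (m+1), dif_neg (by omega), sub_zero]
      have hb := (hbinom s (r - s) (m+1) (by omega) hs0 hek ℓ).2
      rw [add_sub_cancel] at hb
      rw [he1] at hb
      simp only [map_sub, Pi.sub_apply] at hb
      have hgdef : g (m+1) = (ℓ : ℚ)⁻¹ • (coeff q (m+1) - coeff (s ^ ℓ) (m+1)) := by
        rw [hg, gfun, ← hg, ← hsdef]
      have hcast : (ℓ : R) * g (m+1) = coeff q (m+1) - coeff (s ^ ℓ) (m+1) := by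
        rw [hgdef, ← map_natCast (algebraMap ℚ R) ℓ, ← Algebra.smul_def, smul_smul,
            mul_inv_cancel₀ (by exact_mod_cast (by omega : ℓ ≠ 0)), one_smul]
      linear_combination hb + hcast
  exact ⟨r, coeff.injective (funext main)⟩
end

section
/- Define for k ≥ 0, i ≥ 0, and tuples (t₁,…,t_k) of nonnegative integers with t₁+⋯+t_k = i the coefficient γ_i(t₁,…,t_k) = (k+i−1)! · ∑_{(a₁,…,a_k)} C(k+i−2, a₁+⋯+a_k−1) · ∏_{j=1}^k [(−1)^{t_j}·δ(a_j=0) + δ(a_j=t_j+1)], the sum being over all tuples with a_j ∈ {0, t_j+1} and a₁+⋯+a_k ≤ k+i−1. Then γ_i(t₁,…,t_k) = 0 whenever i is odd. -/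
/-- Binomial coefficient `C(n, j)` with `n : ℕ` and integer lower index `j`,
zero when `j < 0`. -/
noncomputable def bchoose (n : ℕ) (j : ℤ) : ℚ := if 0 ≤ j then (n.choose j.toNat : ℚ) else 0

lemma bchoose_symm_aux (n S S' : ℕ) (hn : 2 ≤ n) (h : S + S' = n) :
    bchoose (n - 2) ((S : ℤ) - 1) = bchoose (n - 2) ((S' : ℤ) - 1) := by
  unfold bchoose
  rcases Nat.eq_zero_or_pos S with hS | hS
  · subst hS
    rw [if_neg (by omega), if_pos (by omega)]
    have : (((S' : ℤ) - 1)).toNat = S' - 1 := by omega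
    rw [this, Nat.choose_eq_zero_of_lt (by omega)]
    simp
  rcases Nat.eq_zero_or_pos S' with hS' | hS'
  · subst hS'
    rw [if_pos (by omega), if_neg (by omega)]
    have : (((S : ℤ) - 1)).toNat = S - 1 := by omega
    rw [this, Nat.choose_eq_zero_of_lt (by omega)]
    simp
  · rw [if_pos (by omega), if_pos (by omega)]
    have h1 : (((S : ℤ) - 1)).toNat = S - 1 := by omega
    have h2 : (((S' : ℤ) - 1)).toNat = S' - 1 := by omega
    rw [h1, h2]
    have hle : S - 1 ≤ n - 2 := by omega
    have : S' - 1 = (n - 2) - (S - 1) := by omega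
    rw [this, Nat.choose_symm hle]

/-- For `k ≥ 1`, `i ≥ 0` and a `k`-tuple `(t₁,…,t_k)` of nonnegative integers with
`t₁+⋯+t_k = i`, the coefficient
`γ_i(t₁,…,t_k) = (k+i−1)! ∑_{a} C(k+i−2, a₁+⋯+a_k−1) ∏_j [(−1)^{t_j}δ(a_j=0)+δ(a_j=t_j+1)]`,
where the sum runs over tuples with `a_j ∈ {0, t_j+1}` and `a₁+⋯+a_k ≤ k+i−1`,
vanishes whenever `i` is odd. -/
theorem stmt16 (k i : ℕ) (hk : 1 ≤ k) (t : Fin k → ℕ) (ht : ∑ j, t j = i) (hi : Odd i) :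
    (((k + i - 1).factorial : ℚ) *
      ∑ a ∈ (Fintype.piFinset fun j => ({0, t j + 1} : Finset ℕ)).filter
          (fun a => ∑ j, a j ≤ k + i - 1),
        bchoose (k + i - 2) ((↑(∑ j, a j) : ℤ) - 1) *
          ∏ j, ((-1 : ℚ) ^ (t j) * (if a j = 0 then 1 else 0) +
            (if a j = t j + 1 then 1 else 0))) = 0 := by
  have hi1 : 1 ≤ i := hi.pos
  rw [mul_eq_zero]; right
  -- remove the filter: terms violating the bound have zero binomial factor
  rw [Finset.sum_filter_of_ne (by
    intro a ha hne
    by_contra hgt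
    apply hne
    have : bchoose (k + i - 2) ((↑(∑ j, a j) : ℤ) - 1) = 0 := by
      unfold bchoose
      rw [if_pos (by omega)]
      have : (((∑ j, a j : ℕ) : ℤ) - 1).toNat = (∑ j, a j) - 1 := by omega
      rw [this, Nat.choose_eq_zero_of_lt (by omega)]
      simp
    rw [this, zero_mul])]
  apply Finset.sum_involution (g := fun a _ => fun j => t j + 1 - a j)
  · intro a ha
    · have hmem : ∀ j, a j = 0 ∨ a j = t j + 1 := by
        intro j
        have := Fintype.mem_piFinset.mp ha j
        simpa [Finset.mem_insert, Finset.mem_singleton] using this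
      have hsum : (∑ j, a j) + (∑ j, (t j + 1 - a j)) = k + i := by
        rw [← Finset.sum_add_distrib]
        have : ∀ j : Fin k, a j + (t j + 1 - a j) = t j + 1 := by
          intro j; rcases hmem j with h | h <;> omega
        rw [Finset.sum_congr rfl fun j _ => this j, Finset.sum_add_distrib, ht]
        simp [add_comm]
      have hbc : bchoose (k + i - 2) ((↑(∑ j, (t j + 1 - a j)) : ℤ) - 1)
          = bchoose (k + i - 2) ((↑(∑ j, a j) : ℤ) - 1) :=
        (bchoose_symm_aux (k + i) _ _ (by omega) (by omega)).symm
      have hprod : (∏ j, ((-1 : ℚ) ^ (t j) * (if t j + 1 - a j = 0 then 1 else 0) +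
            (if t j + 1 - a j = t j + 1 then 1 else 0)))
          = (-1) * ∏ j, ((-1 : ℚ) ^ (t j) * (if a j = 0 then 1 else 0) +
            (if a j = t j + 1 then 1 else 0)) := by
        have hj : ∀ j : Fin k,
            ((-1 : ℚ) ^ (t j) * (if t j + 1 - a j = 0 then 1 else 0) +
              (if t j + 1 - a j = t j + 1 then 1 else 0))
            = (-1 : ℚ) ^ (t j) * ((-1 : ℚ) ^ (t j) * (if a j = 0 then 1 else 0) +
              (if a j = t j + 1 then 1 else 0)) := by
          intro j
          rcases hmem j with h | h
          · rw [h]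
            simp only [Nat.sub_zero, if_neg (Nat.succ_ne_zero (t j)), if_pos rfl,
              if_neg (Ne.symm (Nat.succ_ne_zero (t j))), if_true]
            rw [mul_zero, zero_add, mul_one, add_zero, ← pow_add,
              Even.neg_one_pow ⟨t j, rfl⟩]
          · rw [h]
            simp only [Nat.sub_self, if_pos rfl, if_neg (Nat.succ_ne_zero (t j)),
              if_neg (Ne.symm (Nat.succ_ne_zero (t j))), if_true]
            ring
        rw [Finset.prod_congr rfl fun j _ => hj j, Finset.prod_mul_distrib,
          Finset.prod_pow_eq_pow_sum, ht, hi.neg_one_pow]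
      rw [hbc, hprod]
      ring
  · intro a ha hfa hcontra
    have hmem : a ⟨0, hk⟩ = 0 ∨ a ⟨0, hk⟩ = t ⟨0, hk⟩ + 1 := by
      have := Fintype.mem_piFinset.mp ha ⟨0, hk⟩
      simpa [Finset.mem_insert, Finset.mem_singleton] using this
    have := congrFun hcontra ⟨0, hk⟩
    omega
  · intro a ha
    rw [Fintype.mem_piFinset] at ha ⊢
    intro j
    have := ha j
    simp only [Finset.mem_insert, Finset.mem_singleton] at this ⊢
    omega
  · intro a ha
    funext j
    have := Fintype.mem_piFinset.mp ha j
    simp only [Finset.mem_insert, Finset.mem_singleton] at this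
    simp only
    omega
end

section
/- For integers u ≥ 1, m with 1 ≤ m ≤ u, setting K(u,m) = (2u+1)!/(16^{u-1}·(u!)²) · (2m−2)!·(2m−1)!·m!·(2u−2m)!/((2m+1)!·((m−1)!)³·((u−m)!)²) and J(u,m) = (2u−2m+2)!·(2u+1)!·(2m−2)!/(16^u·u·u!·(u+1)!·(m−1)!·(m−2)!·((u+1−m)!)²) (with 1/(−1)! = 0), one has K(u+1,m) − K(u,m) = J(u,m) − J(u,m+1). -/
/-- `K(u,m) = (2u+1)!/(16^{u-1}(u!)²) · (2m−2)!(2m−1)!m!(2u−2m)!/((2m+1)!((m−1)!)³((u−m)!)²)`. -/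
noncomputable def Kfun (u m : ℕ) : ℚ :=
  ((2 * u + 1).factorial : ℚ) / (16 ^ (u - 1) * ((u.factorial : ℚ)) ^ 2) *
    (((2 * m - 2).factorial : ℚ) * ((2 * m - 1).factorial : ℚ) * (m.factorial : ℚ) *
      ((2 * u - 2 * m).factorial : ℚ)) /
    (((2 * m + 1).factorial : ℚ) * (((m - 1).factorial : ℚ)) ^ 3 *
      (((u - m).factorial : ℚ)) ^ 2)

/-- `J(u,m) = (2u−2m+2)!(2u+1)!(2m−2)!/(16^u·u·u!·(u+1)!·(m−1)!·(m−2)!·((u+1−m)!)²)`,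
with the convention `1/(−1)! = 0` (handled by `zfactInv` for the `(m−2)!` term). -/
noncomputable def Jfun (u m : ℕ) : ℚ :=
  ((2 * u + 2 - 2 * m).factorial : ℚ) * ((2 * u + 1).factorial : ℚ) *
      ((2 * m - 2).factorial : ℚ) * zfactInv ((m : ℤ) - 2) /
    (16 ^ u * (u : ℚ) * (u.factorial : ℚ) * ((u + 1).factorial : ℚ) *
      ((m - 1).factorial : ℚ) * (((u + 1 - m).factorial : ℚ)) ^ 2)

lemma zfactInv_natCast (c : ℕ) : zfactInv (c : ℤ) = ((c.factorial : ℚ))⁻¹ := by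
  simp [zfactInv]

lemma fact_ne (n : ℕ) : ((n.factorial : ℚ)) ≠ 0 :=
  Nat.cast_ne_zero.mpr (Nat.factorial_ne_zero n)

lemma case1 (b : ℕ) :
    Kfun (b + 1 + 1) 1 - Kfun (b + 1) 1 = Jfun (b + 1) 1 - Jfun (b + 1) (1 + 1) := by
  simp only [Kfun, Jfun]
  rw [show 2 * (b + 1 + 1) + 1 = 2*b+5 from by ring,
      show 2 * (b + 1 + 1) - 2 * 1 = 2*b+2 from by omega,
      show 2 * (b + 1) + 1 = 2*b+3 from by ring,
      show 2 * (b + 1) - 2 * 1 = 2*b from by omega,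
      show 2 * (b + 1) + 2 - 2 * 1 = 2*b+2 from by omega,
      show 2 * (b + 1) + 2 - 2 * (1 + 1) = 2*b from by omega,
      show b + 1 + 1 - 1 = b+1 from by omega,
      show b + 1 - 1 = b from by omega,
      show b + 1 + 1 - (1 + 1) = b from by omega,
      show (2 * 1 - 2 : ℕ) = 0 from by norm_num,
      show (2 * 1 - 1 : ℕ) = 1 from by norm_num,
      show (2 * 1 + 1 : ℕ) = 3 from by norm_num,
      show (2 * (1+1) - 2 : ℕ) = 2 from by norm_num,
      show ((1 : ℕ) : ℤ) - 2 = (-1 : ℤ) from by norm_num,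
      show ((1 + 1 : ℕ) : ℤ) - 2 = (0 : ℤ) from by norm_num,
      show zfactInv (-1) = 0 from by norm_num [zfactInv],
      show zfactInv 0 = 1 from by norm_num [zfactInv, Nat.factorial],
      show Nat.factorial 0 = 1 from rfl,
      show Nat.factorial 1 = 1 from rfl,
      show Nat.factorial 2 = 2 from rfl,
      show Nat.factorial 3 = 6 from rfl,
      show b + 1 + 1 = b + 2 from by omega]
  rw [show ((2*b+5).factorial : ℚ)
        = (2*(b:ℚ)+5)*(2*(b:ℚ)+4)*((2*b+3).factorial : ℚ) from by
        rw [show 2*b+5 = (2*b+4)+1 from by ring, Nat.factorial_succ,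
            show 2*b+4 = (2*b+3)+1 from by ring, Nat.factorial_succ]
        push_cast; ring,
      show ((2*b+2).factorial : ℚ)
        = (2*(b:ℚ)+2)*(2*(b:ℚ)+1)*((2*b).factorial : ℚ) from by
        rw [show 2*b+2 = (2*b+1)+1 from by ring, Nat.factorial_succ,
            show 2*b+1 = (2*b)+1 from by ring, Nat.factorial_succ]
        push_cast; ring,
      show ((b+2).factorial : ℚ) = ((b:ℚ)+2)*((b:ℚ)+1)*((b).factorial : ℚ) from by
        rw [show b+2 = (b+1)+1 from by ring, Nat.factorial_succ, Nat.factorial_succ]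
        push_cast; ring,
      show ((b+1).factorial : ℚ) = ((b:ℚ)+1)*((b).factorial : ℚ) from by
        rw [Nat.factorial_succ]; push_cast; ring,
      show (16:ℚ) ^ (b+1) = 16 * (16:ℚ) ^ b from by rw [pow_succ]; ring]
  have hb := fact_ne b
  have hE := fact_ne (2*b)
  have hY := fact_ne (2*b+3)
  have hP : (16:ℚ) ^ b ≠ 0 := by positivity
  have l1 : (b:ℚ)+1 ≠ 0 := by positivity
  have l2 : (b:ℚ)+2 ≠ 0 := by positivity
  have l3 : 2*(b:ℚ)+1 ≠ 0 := by positivity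
  have l4 : 2*(b:ℚ)+2 ≠ 0 := by positivity
  push_cast
  field_simp
  ring

lemma case2 (b c : ℕ) :
    Kfun (c + 2 + b + 1) (c + 2) - Kfun (c + 2 + b) (c + 2)
      = Jfun (c + 2 + b) (c + 2) - Jfun (c + 2 + b) (c + 2 + 1) := by
  simp only [Kfun, Jfun]
  rw [show 2 * (c + 2 + b + 1) + 1 = 2*c+2*b+7 from by ring,
      show 2 * (c + 2 + b + 1) - 2 * (c + 2) = 2*b+2 from by omega,
      show 2 * (c + 2 + b) + 1 = 2*c+2*b+5 from by ring,
      show 2 * (c + 2 + b) - 2 * (c + 2) = 2*b from by omega,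
      show 2 * (c + 2 + b) + 2 - 2 * (c + 2) = 2*b+2 from by omega,
      show 2 * (c + 2 + b) + 2 - 2 * (c + 2 + 1) = 2*b from by omega,
      show c + 2 + b + 1 - 1 = c+b+2 from by omega,
      show c + 2 + b - 1 = c+b+1 from by omega,
      show c + 2 + b + 1 - (c + 2) = b+1 from by omega,
      show c + 2 + b - (c + 2) = b from by omega,
      show c + 2 + b + 1 - (c + 2 + 1) = b from by omega,
      show 2 * (c + 2) - 2 = 2*c+2 from by omega,
      show 2 * (c + 2) - 1 = 2*c+3 from by omega,
      show 2 * (c + 2) + 1 = 2*c+5 from by ring,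
      show 2 * (c + 2 + 1) - 2 = 2*c+4 from by omega,
      show c + 2 - 1 = c+1 from by omega,
      show c + 2 + 1 - 1 = c+2 from by omega,
      show c + 2 + b + 1 = c+b+3 from by omega,
      show c + 2 + b = c+b+2 from by omega,
      show ((c + 2 : ℕ) : ℤ) - 2 = (c : ℤ) from by push_cast; ring,
      show ((c + 2 + 1 : ℕ) : ℤ) - 2 = ((c + 1 : ℕ) : ℤ) from by push_cast; ring,
      zfactInv_natCast, zfactInv_natCast]
  rw [show ((2*c+2*b+7).factorial : ℚ)
        = (2*(c:ℚ)+2*b+7) * (2*(c:ℚ)+2*b+6) * ((2*c+2*b+5).factorial : ℚ) from by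
        rw [show 2*c+2*b+7 = (2*c+2*b+6)+1 from by ring, Nat.factorial_succ,
            show 2*c+2*b+6 = (2*c+2*b+5)+1 from by ring, Nat.factorial_succ]
        push_cast; ring,
      show ((c+b+3).factorial : ℚ) = ((c:ℚ)+b+3) * ((c+b+2).factorial : ℚ) from by
        rw [show c+b+3 = (c+b+2)+1 from by ring, Nat.factorial_succ]; push_cast; ring,
      show ((2*c+5).factorial : ℚ)
        = (2*(c:ℚ)+5)*(2*(c:ℚ)+4)*(2*(c:ℚ)+3) * ((2*c+2).factorial : ℚ) from by
        rw [show 2*c+5 = (2*c+4)+1 from by ring, Nat.factorial_succ,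
            show 2*c+4 = (2*c+3)+1 from by ring, Nat.factorial_succ,
            show 2*c+3 = (2*c+2)+1 from by ring, Nat.factorial_succ]
        push_cast; ring,
      show ((2*c+4).factorial : ℚ)
        = (2*(c:ℚ)+4)*(2*(c:ℚ)+3) * ((2*c+2).factorial : ℚ) from by
        rw [show 2*c+4 = (2*c+3)+1 from by ring, Nat.factorial_succ,
            show 2*c+3 = (2*c+2)+1 from by ring, Nat.factorial_succ]
        push_cast; ring,
      show ((2*c+3).factorial : ℚ) = (2*(c:ℚ)+3) * ((2*c+2).factorial : ℚ) from by
        rw [show 2*c+3 = (2*c+2)+1 from by ring, Nat.factorial_succ]; push_cast; ring,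
      show ((c+2).factorial : ℚ) = ((c:ℚ)+2)*((c:ℚ)+1) * ((c).factorial : ℚ) from by
        rw [show c+2 = (c+1)+1 from by ring, Nat.factorial_succ, Nat.factorial_succ]
        push_cast; ring,
      show ((c+1).factorial : ℚ) = ((c:ℚ)+1) * ((c).factorial : ℚ) from by
        rw [Nat.factorial_succ]; push_cast; ring,
      show ((2*b+2).factorial : ℚ)
        = (2*(b:ℚ)+2)*(2*(b:ℚ)+1) * ((2*b).factorial : ℚ) from by
        rw [show 2*b+2 = (2*b+1)+1 from by ring, Nat.factorial_succ,
            show 2*b+1 = (2*b)+1 from by ring, Nat.factorial_succ]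
        push_cast; ring,
      show ((b+1).factorial : ℚ) = ((b:ℚ)+1) * ((b).factorial : ℚ) from by
        rw [Nat.factorial_succ]; push_cast; ring,
      show (16:ℚ) ^ (c+b+2) = 16 * (16:ℚ) ^ (c+b+1) from by rw [pow_succ]; ring]
  have hc := fact_ne c
  have hb := fact_ne b
  have hD := fact_ne (2*c+2)
  have hE := fact_ne (2*b)
  have hY := fact_ne (2*c+2*b+5)
  have hZ := fact_ne (c+b+2)
  have hP : (16:ℚ) ^ (c+b+1) ≠ 0 := by positivity
  have l1 : (c:ℚ)+(b:ℚ)+3 ≠ 0 := by positivity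
  have l2 : (c:ℚ)+(b:ℚ)+2 ≠ 0 := by positivity
  have l3 : (c:ℚ)+1 ≠ 0 := by positivity
  have l4 : (c:ℚ)+2 ≠ 0 := by positivity
  have l5 : (b:ℚ)+1 ≠ 0 := by positivity
  have l6 : 2*(c:ℚ)+3 ≠ 0 := by positivity
  have l7 : 2*(c:ℚ)+4 ≠ 0 := by positivity
  have l8 : 2*(c:ℚ)+5 ≠ 0 := by positivity
  have l9 : 2*(b:ℚ)+1 ≠ 0 := by positivity
  have l10 : 2*(b:ℚ)+2 ≠ 0 := by positivity
  push_cast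
  field_simp
  ring

/-- The telescoping certificate identity `K(u+1,m) − K(u,m) = J(u,m) − J(u,m+1)`
for integers `1 ≤ m ≤ u`. -/
theorem stmt18 (u m : ℕ) (h1 : 1 ≤ m) (h2 : m ≤ u) :
    Kfun (u + 1) m - Kfun u m = Jfun u m - Jfun u (m + 1) := by
  rcases Nat.lt_or_ge m 2 with h | h
  · have hm : m = 1 := by omega
    subst hm
    obtain ⟨b, rfl⟩ : ∃ b, u = b + 1 := ⟨u - 1, by omega⟩
    exact case1 b
  · obtain ⟨c, rfl⟩ : ∃ c, m = c + 2 := ⟨m - 2, by omega⟩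
    obtain ⟨b, rfl⟩ : ∃ b, u = c + 2 + b := ⟨u - (c + 2), by omega⟩
    exact case2 b c
end

section
/- Let C₀ = R[[y;δ]]₂ be the quadratic skew power series ring with commutation law y·f = ∑_{k≥0} ((2k)!/(2^k·(k!)²)) · δ^k(f) · y^{2k+1}. Then y²·f = ∑_{k≥1} (2δ)^{k-1}(f) · y^{2k} for every f ∈ R; equivalently, y^{-2}·f − f·y^{-2} = −2δ(f) in the localization C. -/
open Finset

private lemma sym_aux (m : ℕ) :
    2 * ∑ k ∈ Finset.range (m+1), (k : ℚ) * Nat.centralBinom k * Nat.centralBinom (m-k)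
      = m * ∑ k ∈ Finset.range (m+1), (Nat.centralBinom k : ℚ) * Nat.centralBinom (m-k) := by
  have h := Finset.sum_range_reflect
    (fun k => (k : ℚ) * Nat.centralBinom k * Nat.centralBinom (m-k)) (m+1)
  have h2 : ∑ k ∈ Finset.range (m+1), (k : ℚ) * Nat.centralBinom k * Nat.centralBinom (m-k)
      = ∑ k ∈ Finset.range (m+1), ((m:ℚ) - k) * Nat.centralBinom (m-k) * Nat.centralBinom k := by
    rw [← h]
    apply Finset.sum_congr rfl
    intro k hk
    have hk' : k ≤ m := by simpa using Nat.lt_succ_iff.mp (Finset.mem_range.mp hk)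
    have e1 : m + 1 - 1 - k = m - k := by omega
    have e2 : m - (m - k) = k := by omega
    rw [e1, e2, Nat.cast_sub hk']
  calc 2 * ∑ k ∈ Finset.range (m+1), (k : ℚ) * Nat.centralBinom k * Nat.centralBinom (m-k)
      = (∑ k ∈ Finset.range (m+1), (k : ℚ) * Nat.centralBinom k * Nat.centralBinom (m-k))
        + ∑ k ∈ Finset.range (m+1), ((m:ℚ) - k) * Nat.centralBinom (m-k) * Nat.centralBinom k := by
        rw [← h2]; ring
    _ = ∑ k ∈ Finset.range (m+1),
          ((k : ℚ) * Nat.centralBinom k * Nat.centralBinom (m-k)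
            + ((m:ℚ) - k) * Nat.centralBinom (m-k) * Nat.centralBinom k) := by
        rw [Finset.sum_add_distrib]
    _ = ∑ k ∈ Finset.range (m+1), (m : ℚ) * ((Nat.centralBinom k : ℚ) * Nat.centralBinom (m-k)) := by
        apply Finset.sum_congr rfl; intro k _; ring
    _ = m * ∑ k ∈ Finset.range (m+1), (Nat.centralBinom k : ℚ) * Nat.centralBinom (m-k) := by
        rw [Finset.mul_sum]

private lemma conv_centralBinom (n : ℕ) :
    ∑ k ∈ Finset.range (n+1), ((Nat.centralBinom k : ℚ) * (Nat.centralBinom (n-k) : ℚ)) = 4 ^ n := by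
  induction n with
  | zero => simp [Nat.centralBinom]
  | succ n ih =>
    have hrec : ∀ k : ℕ, ((k:ℚ)+1) * Nat.centralBinom (k+1) = 2 * (2*k+1) * Nat.centralBinom k := by
      intro k
      exact_mod_cast Nat.succ_mul_centralBinom_succ k
    -- S1 = ∑_{k ∈ range (n+2)} k * a k * a (n+1-k)
    have hS1 : ∑ k ∈ Finset.range (n+2), (k : ℚ) * Nat.centralBinom k * Nat.centralBinom (n+1-k)
        = 2*(n+1) * ∑ k ∈ Finset.range (n+1), (Nat.centralBinom k : ℚ) * Nat.centralBinom (n-k) := by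
      rw [Finset.sum_range_succ' (fun k => (k : ℚ) * Nat.centralBinom k * Nat.centralBinom (n+1-k)) (n+1)]
      simp only [Nat.cast_zero, zero_mul, add_zero]
      have hterm : ∀ k ∈ Finset.range (n+1),
          (((k+1 : ℕ)):ℚ) * Nat.centralBinom (k+1) * Nat.centralBinom (n+1-(k+1))
          = 2*(2*k+1) * ((Nat.centralBinom k : ℚ) * Nat.centralBinom (n-k)) := by
        intro k _
        have e : n+1-(k+1) = n-k := by omega
        rw [e]; push_cast; rw [hrec k]; ring
      rw [Finset.sum_congr rfl hterm]
      have expand : ∑ k ∈ Finset.range (n+1), 2*(2*(k:ℚ)+1) * ((Nat.centralBinom k : ℚ) * Nat.centralBinom (n-k))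
          = 4 * (∑ k ∈ Finset.range (n+1), (k : ℚ) * Nat.centralBinom k * Nat.centralBinom (n-k))
            + 2 * ∑ k ∈ Finset.range (n+1), (Nat.centralBinom k : ℚ) * Nat.centralBinom (n-k) := by
        rw [Finset.mul_sum, Finset.mul_sum, ← Finset.sum_add_distrib]
        apply Finset.sum_congr rfl; intro k _; ring
      rw [expand]
      have hsym := sym_aux n
      nlinarith [hsym]
    have hsym1 := sym_aux (n+1)
    rw [hS1] at hsym1
    push_cast at hsym1
    have hn1 : ((n:ℚ)+1) ≠ 0 := by positivity
    have key : ∑ k ∈ Finset.range (n+1+1), (Nat.centralBinom k : ℚ) * Nat.centralBinom (n+1-k)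
        = 4 * ∑ k ∈ Finset.range (n+1), (Nat.centralBinom k : ℚ) * Nat.centralBinom (n-k) :=
      mul_left_cancel₀ hn1 (by linarith [hsym1])
    rw [key, ih]; ring

private lemma conv_c (n : ℕ) :
    ∑ k ∈ Finset.range (n+1),
      ((((2*k).factorial : ℚ) / (2^k * ((k.factorial : ℚ))^2)) *
       (((2*(n-k)).factorial : ℚ) / (2^(n-k) * (((n-k).factorial : ℚ))^2))) = 2^n := by
  have hfact : ∀ k : ℕ, ((2*k).factorial : ℚ) = Nat.centralBinom k * ((k.factorial : ℚ))^2 := by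
    intro k
    have h := Nat.choose_mul_factorial_mul_factorial (show k ≤ 2*k by omega)
    have e : 2*k - k = k := by omega
    rw [e] at h
    calc ((2*k).factorial : ℚ)
        = (((2*k).choose k * k.factorial * k.factorial : ℕ) : ℚ) := by rw [h]
      _ = Nat.centralBinom k * ((k.factorial : ℚ))^2 := by
          rw [Nat.centralBinom]; push_cast; ring
  have hterm : ∀ k ∈ Finset.range (n+1),
      ((((2*k).factorial : ℚ) / (2^k * ((k.factorial : ℚ))^2)) *
       (((2*(n-k)).factorial : ℚ) / (2^(n-k) * (((n-k).factorial : ℚ))^2)))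
      = ((Nat.centralBinom k : ℚ) * Nat.centralBinom (n-k)) / 2^n := by
    intro k hk
    have hk' : k ≤ n := Nat.lt_succ_iff.mp (Finset.mem_range.mp hk)
    have hp : (2:ℚ)^k * 2^(n-k) = 2^n := by
      rw [← pow_add]; congr 1; omega
    have hf1 : ((k.factorial : ℚ)) ≠ 0 := by positivity
    have hf2 : (((n-k).factorial : ℚ)) ≠ 0 := by positivity
    rw [hfact k, hfact (n-k)]
    field_simp
    rw [← hp]; ring
  rw [Finset.sum_congr rfl hterm, ← Finset.sum_div, conv_centralBinom]
  norm_num [div_eq_iff, ← pow_add]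
  rw [show (4:ℚ) = 2*2 by norm_num, mul_pow, ← pow_add]


/-- In the quadratic skew power series ring `C₀ = R[[y;δ]]₂` with commutation law
`y·f = ∑_{k≥0} ((2k)!/(2^k (k!)²)) δ^k(f) y^{2k+1}` (expressed here by the
left-multiplication-by-`y` rule on coefficient sequences), one has
`y²·f = ∑_{k≥1} (2δ)^{k-1}(f) y^{2k}` for every `f ∈ R`: coefficientwise, the `m`-th
coefficient of `y·(y·ι(f))` equals `(2δ)^{m/2-1}(f)` when `m` is even with `m ≥ 2`,
and `0` otherwise. -/
theorem stmt19 {R : Type*} [CommRing R] [IsDomain R] [Algebra ℚ R]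
    (δ : Derivation ℚ R R)
    {C : Type*} [Ring C] (coeff : C ≃+ (ℕ → R)) (ι : R →+* C)
    (hι : ∀ (f : R) (n : ℕ), coeff (ι f) n = if n = 0 then f else 0)
    (y : C)
    (hy : ∀ (q : C) (m : ℕ),
      coeff (y * q) m =
        if m = 0 then 0 else
          ∑ k ∈ Finset.range m,
            if 2 * k + 1 ≤ m then
              algebraMap ℚ R (((2 * k).factorial : ℚ) / (2 ^ k * ((k.factorial : ℚ)) ^ 2)) *
                (⇑δ)^[k] (coeff q (m - 1 - 2 * k))
            else 0) :
    ∀ (f : R) (m : ℕ),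
      coeff (y * (y * ι f)) m =
        if 2 ≤ m ∧ Even m then ((fun a => (2 : R) * δ a)^[m / 2 - 1]) f else 0 := by
  intro f m
  set cq : ℕ → ℚ := fun k => (((2 * k).factorial : ℚ) / (2 ^ k * ((k.factorial : ℚ)) ^ 2)) with hcq
  set c : ℕ → R := fun k => algebraMap ℚ R (cq k) with hc
  -- iterates of δ kill 0
  have hδ0 : ∀ k : ℕ, (⇑δ)^[k] (0:R) = 0 := by
    intro k
    induction k with
    | zero => rfl
    | succ k ih => rw [Function.iterate_succ_apply, map_zero, ih]
  -- iterates of δ commute with multiplication by algebraMap of a rational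
  have hconst : ∀ (q : ℚ) (k : ℕ) (x : R),
      (⇑δ)^[k] (algebraMap ℚ R q * x) = algebraMap ℚ R q * (⇑δ)^[k] x := by
    intro q k
    induction k with
    | zero => intro x; rfl
    | succ k ih =>
      intro x
      rw [Function.iterate_succ_apply, Function.iterate_succ_apply]
      have : δ (algebraMap ℚ R q * x) = algebraMap ℚ R q * δ x := by
        rw [Derivation.leibniz, Derivation.map_algebraMap]
        simp [smul_eq_mul, mul_comm]
      rw [this, ih]
  -- the first multiplication
  have hg : ∀ j : ℕ, coeff (y * ι f) j
      = if j % 2 = 1 then c ((j-1)/2) * (⇑δ)^[(j-1)/2] f else 0 := by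
    intro j
    rw [hy]
    rcases Nat.eq_zero_or_pos j with h0 | hpos
    · subst h0; norm_num
    · rw [if_neg hpos.ne']
      have hterm : ∀ k ∈ Finset.range j,
          (if 2 * k + 1 ≤ j then c k * (⇑δ)^[k] (coeff (ι f) (j - 1 - 2 * k)) else 0)
          = if j = 2 * k + 1 then c k * (⇑δ)^[k] f else 0 := by
        intro k _
        rw [hι]
        by_cases h1 : 2 * k + 1 ≤ j
        · by_cases h2 : j - 1 - 2 * k = 0
          · have hj : j = 2 * k + 1 := by omega
            rw [if_pos h1, if_pos h2, if_pos hj]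
          · rw [if_pos h1, if_neg h2, hδ0, mul_zero, if_neg (by omega)]
        · rw [if_neg h1, if_neg (by omega)]
      rw [Finset.sum_congr rfl hterm]
      by_cases hodd : j % 2 = 1
      · rw [if_pos hodd]
        rw [Finset.sum_eq_single ((j-1)/2)]
        · rw [if_pos (by omega)]
        · intro b _ hb
          rw [if_neg (by omega)]
        · intro hmem
          exfalso; apply hmem; exact Finset.mem_range.mpr (by omega)
      · rw [if_neg hodd]
        apply Finset.sum_eq_zero
        intro k _
        rw [if_neg (by omega)]
  -- the second multiplication
  rw [hy]
  rcases Nat.eq_zero_or_pos m with h0 | hpos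
  · subst h0; norm_num
  · rw [if_neg hpos.ne']
    by_cases hev : m % 2 = 0
    · -- even case : m = 2*n, n ≥ 1
      obtain ⟨n, hn⟩ : ∃ n, m = 2 * n := ⟨m / 2, by omega⟩
      have hn1 : 1 ≤ n := by omega
      have hterm : ∀ k ∈ Finset.range m,
          (if 2 * k + 1 ≤ m then c k * (⇑δ)^[k] (coeff (y * ι f) (m - 1 - 2 * k)) else 0)
          = if k < n then algebraMap ℚ R (cq k * cq (n-1-k)) * (⇑δ)^[n-1] f else 0 := by
        intro k _
        by_cases h1 : k < n
        · have h2 : 2 * k + 1 ≤ m := by omega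
          rw [if_pos h2, if_pos h1, hg]
          have h3 : (m - 1 - 2 * k) % 2 = 1 := by omega
          have h4 : (m - 1 - 2 * k - 1) / 2 = n - 1 - k := by omega
          rw [if_pos h3, h4, hc]
          rw [hconst]
          have h5 : (⇑δ)^[k] ((⇑δ)^[n-1-k] f) = (⇑δ)^[n-1] f := by
            rw [← Function.iterate_add_apply]
            congr 1; omega
          rw [h5, map_mul]
          ring
        · rw [if_neg (by omega), if_neg h1]
      rw [Finset.sum_congr rfl hterm]
      have hsub : ∑ k ∈ Finset.range m,
            (if k < n then algebraMap ℚ R (cq k * cq (n-1-k)) * (⇑δ)^[n-1] f else 0)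
          = ∑ k ∈ Finset.range n, algebraMap ℚ R (cq k * cq (n-1-k)) * (⇑δ)^[n-1] f := by
        rw [← Finset.sum_subset (Finset.range_subset_range.mpr (by omega : n ≤ m))]
        · apply Finset.sum_congr rfl
          intro k hk
          rw [if_pos (Finset.mem_range.mp hk)]
        · intro k _ hk
          rw [if_neg (by simpa using hk)]
      rw [hsub]
      have hsum : ∑ k ∈ Finset.range n, algebraMap ℚ R (cq k * cq (n-1-k)) * (⇑δ)^[n-1] f
          = algebraMap ℚ R (2 ^ (n-1)) * (⇑δ)^[n-1] f := by
        rw [← Finset.sum_mul, ← map_sum]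
        congr 2
        have := conv_c (n-1)
        rw [show n - 1 + 1 = n by omega] at this
        simpa [hcq] using this
      rw [hsum]
      -- now the RHS
      have h2δ : ∀ (j : ℕ) (x : R),
          ((fun a => (2 : R) * δ a)^[j]) x = algebraMap ℚ R (2^j) * (⇑δ)^[j] x := by
        intro j
        induction j with
        | zero => intro x; simp
        | succ j ih =>
          intro x
          rw [Function.iterate_succ_apply, Function.iterate_succ_apply, ih]
          have h2 : (2 : R) = algebraMap ℚ R 2 := by
            rw [map_ofNat]
          rw [h2, hconst, ← mul_assoc, ← map_mul]
          ring_nf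
      rw [if_pos ⟨by omega, by exact ⟨n, by omega⟩⟩,
        show m / 2 - 1 = n - 1 from by omega, h2δ]
    · -- odd case
      rw [if_neg (by rintro ⟨-, n, hn⟩; omega)]
      apply Finset.sum_eq_zero
      intro k _
      by_cases h1 : 2 * k + 1 ≤ m
      · rw [if_pos h1, hg, if_neg (by omega), hδ0, mul_zero]
      · rw [if_neg h1]
end
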